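/- arXiv:2509.13923 — 2 statements merged into one kernel-verified Lean document; each statement's English description precedes it below -/
import Mathlib

section
/- Let n, T ≥ 1 and p > 0. Let Σ be a random symmetric positive semidefinite n×n matrix with E[τ(Σ²)] = 1 + p and E[τ(Σ)²] = 1, independent of the n×T random matrix X whose T columns are i.i.d. copies of a rotationally invariant random vector ξ in ℝⁿ satisfying E[ξξᵀ] = Iₙ and E[‖ξ‖⁴] < ∞. Define E = (1/T)·√Σ X Xᵀ √Σ (where √Σ is the positive semidefinite square root) and γ = E[‖ξ‖⁴]/(n(n+2)). Then E[τ(E²)] = ((T−1)/T)·(1+p) + γ·(n + 2(1+p))/T; consequently, if n, T → ∞ with n/T → q > 0 and γ stays bounded, E[τ(E²)] → 1 + p + q·γ (with γ held fixed along the limit). -/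
/-!
With `W = X Xᵀ`, cycling the square roots gives `τ(E²) = tr(Σ W Σ W) / (n T²)`, and independence
of `Σ` and `X` splits `E tr(Σ W Σ W) = ∑ E[Σ_ik Σ_jl] E[W_kj W_li]`. Distinct columns of `X` are
independent with covariance `I`, so `E[W_kj W_li] = T (T - 1) δ_kj δ_li + T E[ξ_k ξ_j ξ_l ξ_i]`.

Rotation invariance makes the fourth-moment tensor of `ξ` isotropic,
`E[ξ_i ξ_j ξ_k ξ_l] = γ (δ_ij δ_kl + δ_ik δ_jl + δ_il δ_jk)`, and Householder reflections suffice
to see it: the one in `e_i^⊥` kills every moment with an unpaired index, the one in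
`(e_a - e_b)^⊥` swaps two coordinates, and the one in `(e_a + 2 e_b)^⊥` sends `ξ_a` to
`(3 ξ_a - 4 ξ_b) / 5`, which forces `E ξ_a⁴ = 3 E ξ_a² ξ_b²`. Summing `E ξ_i² ξ_j²` over `i, j`
identifies the constant as `γ`. Contracting the deltas leaves `E tr Σ² = E tr Σ Σᵀ = n (1 + p)`
and `E (tr Σ)² = n²`.
-/

open MeasureTheory ProbabilityTheory Matrix Filter

noncomputable def tau (n : ℕ) (A : Matrix (Fin n) (Fin n) ℝ) : ℝ := (1 / (n : ℝ)) * A.trace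

instance matrixMeasurableSpace {m k α : Type*} [MeasurableSpace α] :
    MeasurableSpace (Matrix m k α) :=
  inferInstanceAs (MeasurableSpace (m → k → α))

theorem trace_eq_mul_tau {n : ℕ} (A : Matrix (Fin n) (Fin n) ℝ) : A.trace = n * tau n A := by
  rcases Nat.eq_zero_or_pos n with rfl | hn
  · simp [Matrix.trace]
  · simp only [tau]
    field_simp

theorem abs_mul_le_sum_sq {ι : Type*} [Fintype ι] (v : ι → ℝ) (a b : ι) :
    |v a * v b| ≤ ∑ i, v i ^ 2 := by
  have hle : ∀ c, v c ^ 2 ≤ ∑ i, v i ^ 2 := fun c =>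
    Finset.single_le_sum (f := fun i => v i ^ 2) (fun i _ => sq_nonneg _) (Finset.mem_univ c)
  rw [abs_mul]
  nlinarith [hle a, hle b, sq_nonneg (|v a| - |v b|), sq_abs (v a), sq_abs (v b)]

theorem sum_mul_kronecker {ι : Type*} [Fintype ι] [DecidableEq ι] (C : ι → ι → ι → ι → ℝ)
    (a b c : ℝ) :
    ∑ i, ∑ j, ∑ k, ∑ l, C i k j l * (a * ((if k = j then 1 else 0) * (if l = i then 1 else 0))
        + b * ((if k = l then 1 else 0) * (if j = i then 1 else 0))
        + c * ((if k = i then 1 else 0) * (if j = l then 1 else 0))) =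
      a * ∑ i, ∑ j, C i j j i + b * ∑ i, ∑ k, C i k i k + c * ∑ i, ∑ j, C i i j j := by
  simp [mul_add, Finset.sum_add_distrib, Finset.mul_sum, mul_ite, mul_comm]

namespace Matrix

variable {ι : Type*} [Fintype ι]

theorem trace_conj_mul_conj (R W : Matrix ι ι ℝ) :
    (R * W * R * (R * W * R)).trace = (R * R * W * (R * R) * W).trace := by
  rw [← trace_mul_cycle, ← Matrix.mul_assoc]
  simp only [Matrix.mul_assoc]

theorem trace_mul_mul_mul_mul (A W : Matrix ι ι ℝ) :
    (A * W * A * W).trace = ∑ i, ∑ j, ∑ k, ∑ l, A i k * A j l * (W k j * W l i) := by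
  simp only [trace, diag, mul_apply, Finset.sum_mul]
  refine Finset.sum_congr rfl fun i _ => ?_
  rw [Finset.sum_comm]
  refine Finset.sum_congr rfl fun j _ => ?_
  rw [Finset.sum_comm]
  exact Finset.sum_congr rfl fun k _ => Finset.sum_congr rfl fun l _ => by ring

variable [DecidableEq ι]

/-- The reflection in the hyperplane `w^⊥` (the identity when `w = 0`). -/
noncomputable def householder (w : ι → ℝ) : Matrix ι ι ℝ := 1 - (2 / (w ⬝ᵥ w)) • vecMulVec w w

theorem householder_mulVec (w v : ι → ℝ) :
    householder w *ᵥ v = v - (2 * (w ⬝ᵥ v) / (w ⬝ᵥ w)) • w := by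
  ext r
  simp only [householder, sub_mulVec, one_mulVec, smul_mulVec, vecMulVec_mulVec, op_smul_eq_smul,
    Pi.sub_apply, Pi.smul_apply, smul_eq_mul, sub_right_inj]
  ring

theorem transpose_householder_mul_self (w : ι → ℝ) : (householder w)ᵀ * householder w = 1 := by
  by_cases hw : w ⬝ᵥ w = 0
  · simp [householder, hw]
  have hT : (householder w)ᵀ = householder w := by
    simp [householder, transpose_vecMulVec]
  rw [hT, householder, sub_mul, mul_sub, mul_sub, smul_mul_smul_comm, vecMulVec_mul_vecMulVec]
  simp only [one_mul, mul_one, vecMulVec_smul]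
  rw [smul_smul]
  field_simp
  module

end Matrix

theorem tau_smul_conj_mul_smul_conj {n : ℕ} {κ : Type*} [Fintype κ]
    (R : Matrix (Fin n) (Fin n) ℝ) (X : Matrix (Fin n) κ ℝ) (c : ℝ) :
    tau n (c • (R * X * Xᵀ * R) * (c • (R * X * Xᵀ * R))) =
      c ^ 2 / n * (R * R * (X * Xᵀ) * (R * R) * (X * Xᵀ)).trace := by
  have hassoc : R * X * Xᵀ * R = R * (X * Xᵀ) * R := by simp only [Matrix.mul_assoc]
  rw [hassoc, smul_mul_smul_comm, tau, trace_smul, trace_conj_mul_conj, smul_eq_mul]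
  ring

section RandomVector

variable {ι : Type*} [Fintype ι] {Ω : Type*} [MeasurableSpace Ω] {μ : Measure Ω}
  {ξ : Ω → ι → ℝ}

noncomputable def fourthMoment (μ : Measure Ω) (ξ : Ω → ι → ℝ) (i j k l : ι) : ℝ :=
  ∫ ω, ξ ω i * ξ ω j * ξ ω k * ξ ω l ∂μ

/-- The `γ` of the statement, normalized so that `γ = 1` for a standard Gaussian vector. -/
noncomputable def normalizedFourthMoment (μ : Measure Ω) (ξ : Ω → ι → ℝ) : ℝ :=
  (∫ ω, (∑ i, ξ ω i ^ 2) ^ 2 ∂μ) / (Fintype.card ι * (Fintype.card ι + 2))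

omit [Fintype ι] in
theorem fourthMoment_rotate (i j k l : ι) :
    fourthMoment μ ξ i j k l = fourthMoment μ ξ j k l i :=
  integral_congr_ae (ae_of_all _ fun ω => by ring)

omit [Fintype ι] in
theorem fourthMoment_swap (i j k l : ι) :
    fourthMoment μ ξ i j k l = fourthMoment μ ξ i k j l :=
  integral_congr_ae (ae_of_all _ fun ω => by ring)

theorem integrable_coord_mul_coord_mul_coord_mul_coord (hξ : AEMeasurable ξ μ)
    (h4 : Integrable (fun ω => (∑ i, ξ ω i ^ 2) ^ 2) μ) (i j k l : ι) :
    Integrable (fun ω => ξ ω i * ξ ω j * ξ ω k * ξ ω l) μ := by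
  refine h4.mono (by fun_prop) (ae_of_all _ fun ω => ?_)
  rw [Real.norm_eq_abs, Real.norm_eq_abs, abs_sq, mul_assoc, abs_mul, sq]
  exact mul_le_mul (abs_mul_le_sum_sq _ i j) (abs_mul_le_sum_sq _ k l) (abs_nonneg _)
    (by positivity)

theorem integrable_coord_mul_coord [IsFiniteMeasure μ] (hξ : AEMeasurable ξ μ)
    (h4 : Integrable (fun ω => (∑ i, ξ ω i ^ 2) ^ 2) μ) (i j : ι) :
    Integrable (fun ω => ξ ω i * ξ ω j) μ := by
  have h2 : Integrable (fun ω => ∑ i, ξ ω i ^ 2) μ :=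
    ((memLp_two_iff_integrable_sq (by fun_prop)).2 h4).integrable one_le_two
  refine h2.mono (by fun_prop) (ae_of_all _ fun ω => ?_)
  rw [Real.norm_eq_abs, Real.norm_of_nonneg (by positivity)]
  exact abs_mul_le_sum_sq _ i j

theorem sum_fourthMoment_self_self (hξ : AEMeasurable ξ μ)
    (h4 : Integrable (fun ω => (∑ i, ξ ω i ^ 2) ^ 2) μ) :
    ∑ i, ∑ j, fourthMoment μ ξ i i j j = ∫ ω, (∑ i, ξ ω i ^ 2) ^ 2 ∂μ := by
  have hI := integrable_coord_mul_coord_mul_coord_mul_coord hξ h4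
  have hexpand : ∀ ω, (∑ i, ξ ω i ^ 2) ^ 2 = ∑ i, ∑ j, ξ ω i * ξ ω i * ξ ω j * ξ ω j := by
    intro ω
    simp only [sq, Finset.sum_mul_sum, mul_assoc]
  rw [integral_congr_ae (ae_of_all _ hexpand),
    integral_finsetSum _ fun i _ => integrable_finsetSum _ fun j _ => hI i i j j]
  exact Finset.sum_congr rfl fun i _ => (integral_finsetSum _ fun j _ => hI i i j j).symm

variable [DecidableEq ι]

def IsRotationInvariant (μ : Measure Ω) (ξ : Ω → ι → ℝ) : Prop :=
  ∀ O : Matrix ι ι ℝ, Oᵀ * O = 1 → Measure.map (fun ω => O.mulVec (ξ ω)) μ = Measure.map ξ μ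

theorem IsRotationInvariant.integral_householder_mulVec (h : IsRotationInvariant μ ξ)
    (hξ : AEMeasurable ξ μ) (w : ι → ℝ) {f : (ι → ℝ) → ℝ} (hf : Measurable f) :
    ∫ ω, f (householder w *ᵥ ξ ω) ∂μ = ∫ ω, f (ξ ω) ∂μ := by
  have hH : Measurable fun v : ι → ℝ => householder w *ᵥ v := by fun_prop
  have hHξ : AEMeasurable (fun ω => householder w *ᵥ ξ ω) μ := hH.comp_aemeasurable hξ
  unfold IsRotationInvariant at h
  rw [← integral_map hξ hf.aestronglyMeasurable, ← h _ (transpose_householder_mul_self w),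
    integral_map hHξ hf.aestronglyMeasurable]

theorem IsRotationInvariant.fourthMoment_eq_zero (h : IsRotationInvariant μ ξ)
    (hξ : AEMeasurable ξ μ) {i j k l : ι} (hij : i ≠ j) (hik : i ≠ k) (hil : i ≠ l) :
    fourthMoment μ ξ i j k l = 0 := by
  have hflip : ∀ v : ι → ℝ, householder (Pi.single i 1) *ᵥ v = Function.update v i (-v i) := by
    intro v
    ext r
    rcases eq_or_ne r i with rfl | hr
    · simp only [householder_mulVec, single_dotProduct, dotProduct_single, Pi.single_eq_same,
        one_mul, mul_one, div_one, Pi.sub_apply, Pi.smul_apply, smul_eq_mul, Function.update_self]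
      ring
    · simp only [householder_mulVec, Pi.sub_apply, Pi.smul_apply, Pi.single_eq_of_ne hr,
        smul_eq_mul, mul_zero, sub_zero, Function.update_of_ne hr]
  have := h.integral_householder_mulVec hξ (Pi.single i 1)
    (f := fun v => v i * v j * v k * v l) (by fun_prop)
  simp only [hflip, Function.update_self, Function.update_of_ne hij.symm,
    Function.update_of_ne hik.symm, Function.update_of_ne hil.symm, neg_mul, integral_neg] at this
  unfold fourthMoment
  linarith

theorem IsRotationInvariant.fourthMoment_diag_eq (h : IsRotationInvariant μ ξ)
    (hξ : AEMeasurable ξ μ) (a b : ι) :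
    fourthMoment μ ξ b b b b = fourthMoment μ ξ a a a a := by
  rcases eq_or_ne a b with rfl | hab
  · rfl
  have hswap : ∀ v : ι → ℝ, (householder (Pi.single a 1 - Pi.single b 1) *ᵥ v) a = v b := by
    intro v
    simp only [householder_mulVec, sub_dotProduct, single_dotProduct, dotProduct_sub,
      dotProduct_single, Pi.sub_apply, Pi.single_eq_same, Pi.single_eq_of_ne hab,
      Pi.single_eq_of_ne hab.symm, Pi.smul_apply, smul_eq_mul]
    field_simp
    ring
  have := h.integral_householder_mulVec hξ (Pi.single a 1 - Pi.single b 1)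
    (f := fun v => v a * v a * v a * v a) (by fun_prop)
  unfold fourthMoment
  simpa only [hswap] using this

theorem IsRotationInvariant.fourthMoment_diag_eq_three_mul (h : IsRotationInvariant μ ξ)
    (hξ : AEMeasurable ξ μ) (h4 : Integrable (fun ω => (∑ i, ξ ω i ^ 2) ^ 2) μ)
    {a b : ι} (hab : a ≠ b) :
    fourthMoment μ ξ a a a a = 3 * fourthMoment μ ξ a a b b := by
  -- `(3/5, -4/5)` is a rational unit vector, so no square roots appear
  have hrefl : ∀ v : ι → ℝ,
      (householder (Pi.single a 1 + Pi.single b 2) *ᵥ v) a = (3 * v a - 4 * v b) / 5 := by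
    intro v
    simp only [householder_mulVec, add_dotProduct, single_dotProduct, dotProduct_add,
      dotProduct_single, Pi.add_apply, Pi.single_eq_same, Pi.single_eq_of_ne hab,
      Pi.single_eq_of_ne hab.symm, Pi.sub_apply, Pi.smul_apply, smul_eq_mul]
    field_simp
    ring
  have hexpand : ∀ x y : ℝ, (3 * x - 4 * y) / 5 * ((3 * x - 4 * y) / 5) * ((3 * x - 4 * y) / 5)
      * ((3 * x - 4 * y) / 5) = 81 / 625 * (x * x * x * x) - 432 / 625 * (x * x * x * y)
        + 864 / 625 * (x * x * y * y) - 768 / 625 * (x * y * y * y)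
        + 256 / 625 * (y * y * y * y) := by
    intros; ring
  have := h.integral_householder_mulVec hξ (Pi.single a 1 + Pi.single b 2)
    (f := fun v => v a * v a * v a * v a) (by fun_prop)
  have hI := integrable_coord_mul_coord_mul_coord_mul_coord hξ h4
  simp only [hrefl, hexpand] at this
  rw [integral_add (by fun_prop) (by fun_prop), integral_sub (by fun_prop) (by fun_prop),
    integral_add (by fun_prop) (by fun_prop), integral_sub (by fun_prop) (by fun_prop),
    integral_const_mul, integral_const_mul, integral_const_mul, integral_const_mul,
    integral_const_mul] at this
  change 81 / 625 * fourthMoment μ ξ a a a a - 432 / 625 * fourthMoment μ ξ a a a b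
    + 864 / 625 * fourthMoment μ ξ a a b b - 768 / 625 * fourthMoment μ ξ a b b b
    + 256 / 625 * fourthMoment μ ξ b b b b = fourthMoment μ ξ a a a a at this
  have haaab : fourthMoment μ ξ a a a b = 0 := by
    rw [fourthMoment_rotate, fourthMoment_rotate, fourthMoment_rotate]
    exact h.fourthMoment_eq_zero hξ hab.symm hab.symm hab.symm
  rw [haaab, h.fourthMoment_eq_zero hξ hab hab hab, h.fourthMoment_diag_eq hξ a b] at this
  linarith

theorem IsRotationInvariant.fourthMoment_diag (h : IsRotationInvariant μ ξ)
    (hξ : AEMeasurable ξ μ) (h4 : Integrable (fun ω => (∑ i, ξ ω i ^ 2) ^ 2) μ) (a : ι) :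
    fourthMoment μ ξ a a a a = 3 * normalizedFourthMoment μ ξ := by
  set m := fourthMoment μ ξ a a a a
  have hpair : ∀ i j, fourthMoment μ ξ i i j j = m / 3 + if i = j then 2 * m / 3 else 0 := by
    intro i j
    rcases eq_or_ne i j with rfl | hij
    · rw [h.fourthMoment_diag_eq hξ a, if_pos rfl]; ring
    · have := h.fourthMoment_diag_eq_three_mul hξ h4 hij
      rw [h.fourthMoment_diag_eq hξ a i] at this
      simp only [hij, if_false]
      linarith
  have hcard : (0 : ℝ) < Fintype.card ι := by exact_mod_cast Fintype.card_pos_iff.2 ⟨a⟩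
  rw [normalizedFourthMoment, ← sum_fourthMoment_self_self hξ h4]
  simp only [hpair, Finset.sum_add_distrib, Finset.sum_const, Finset.sum_ite_eq,
    Finset.mem_univ, if_true, Finset.card_univ, nsmul_eq_mul]
  field_simp

theorem IsRotationInvariant.fourthMoment_eq (h : IsRotationInvariant μ ξ)
    (hξ : AEMeasurable ξ μ) (h4 : Integrable (fun ω => (∑ i, ξ ω i ^ 2) ^ 2) μ) (i j k l : ι) :
    fourthMoment μ ξ i j k l = normalizedFourthMoment μ ξ *
        ((if i = j then 1 else 0) * (if k = l then 1 else 0)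
          + (if i = k then 1 else 0) * (if j = l then 1 else 0)
          + (if i = l then 1 else 0) * (if j = k then 1 else 0)) := by
  set γ := normalizedFourthMoment μ ξ
  have hdiag := h.fourthMoment_diag hξ h4
  have hself : ∀ i k l, fourthMoment μ ξ i i k l =
      γ * ((if k = l then 1 else 0) + 2 * (if i = k then 1 else 0) * (if i = l then 1 else 0)) := by
    intro i k l
    rcases eq_or_ne k l with rfl | hkl
    · rcases eq_or_ne i k with rfl | hik
      · simp only [hdiag, if_true]; ring
      · have := h.fourthMoment_diag_eq_three_mul hξ h4 hik
        simp only [hdiag, hik, if_true, if_false] at this ⊢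
        linarith
    rcases eq_or_ne k i with rfl | hki
    · rw [fourthMoment_rotate, fourthMoment_rotate, fourthMoment_rotate,
        h.fourthMoment_eq_zero hξ hkl.symm hkl.symm hkl.symm]
      simp [hkl]
    · rw [fourthMoment_rotate, fourthMoment_rotate, h.fourthMoment_eq_zero hξ hkl hki hki]
      simp [hkl, hki.symm]
  rcases eq_or_ne i j with rfl | hij
  · rw [hself]; simp only [if_true]; ring
  rcases eq_or_ne i k with rfl | hik
  · rw [fourthMoment_swap, hself]; simp [hij, hij.symm]
  rcases eq_or_ne i l with rfl | hil
  · rw [fourthMoment_rotate, fourthMoment_rotate, fourthMoment_rotate, hself]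
    simp [hij, hik]
  · rw [h.fourthMoment_eq_zero hξ hij hik hil]
    simp [hij, hik, hil]

end RandomVector

section IIDCopies

variable {ι : Type*} [Fintype ι] {Ω : Type*} [MeasurableSpace Ω] {μ : Measure Ω}
  {ξ : Ω → ι → ℝ} {κ : Type*} {Y : κ → Ω → ι → ℝ}

theorem integrable_iid_coord_products [IsFiniteMeasure μ] (hY : iIndepFun Y μ)
    (hYξ : ∀ t, IdentDistrib (Y t) ξ μ μ) (hξ : AEMeasurable ξ μ)
    (h4 : Integrable (fun ω => (∑ i, ξ ω i ^ 2) ^ 2) μ) (t s : κ) (k j l i : ι) :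
    Integrable (fun ω => Y t ω k * Y t ω j * (Y s ω l * Y s ω i)) μ := by
  rcases eq_or_ne t s with rfl | hts
  · refine ((hYξ t).comp (u := fun v : ι → ℝ => v k * v j * (v l * v i))
      (by fun_prop)).integrable_iff.2 ?_
    simpa only [Function.comp_def, ← mul_assoc] using
      integrable_coord_mul_coord_mul_coord_mul_coord hξ h4 k j l i
  · have h2 : ∀ t a b, Integrable (fun ω => Y t ω a * Y t ω b) μ := fun t a b =>
      ((hYξ t).comp (u := fun v : ι → ℝ => v a * v b) (by fun_prop)).integrable_iff.2
        (integrable_coord_mul_coord hξ h4 a b)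
    exact ((hY.indepFun hts).comp (φ := fun v : ι → ℝ => v k * v j)
      (ψ := fun v : ι → ℝ => v l * v i) (by fun_prop) (by fun_prop)).integrable_mul
      (h2 t k j) (h2 s l i)

omit [Fintype ι] in
theorem integral_iid_coord_products [DecidableEq κ] (hY : iIndepFun Y μ)
    (hYξ : ∀ t, IdentDistrib (Y t) ξ μ μ) (t s : κ) (k j l i : ι) :
    ∫ ω, Y t ω k * Y t ω j * (Y s ω l * Y s ω i) ∂μ = if t = s then fourthMoment μ ξ k j l i
      else (∫ ω, ξ ω k * ξ ω j ∂μ) * ∫ ω, ξ ω l * ξ ω i ∂μ := by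
  rcases eq_or_ne t s with rfl | hts
  · rw [if_pos rfl]
    exact ((hYξ t).comp (u := fun v : ι → ℝ => v k * v j * (v l * v i))
      (by fun_prop)).integral_eq.trans
      (integral_congr_ae (ae_of_all _ fun ω => by simp only [Function.comp_apply]; ring))
  · have h2 : ∀ t a b, ∫ ω, Y t ω a * Y t ω b ∂μ = ∫ ω, ξ ω a * ξ ω b ∂μ := fun t a b =>
      ((hYξ t).comp (u := fun v : ι → ℝ => v a * v b) (by fun_prop)).integral_eq
    rw [if_neg hts, ← h2 t, ← h2 s]
    have := (hYξ t).aemeasurable_fst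
    have := (hYξ s).aemeasurable_fst
    exact ((hY.indepFun hts).comp (φ := fun v : ι → ℝ => v k * v j)
      (ψ := fun v : ι → ℝ => v l * v i) (by fun_prop) (by fun_prop)).integral_mul_eq_mul_integral
      (by fun_prop) (by fun_prop)

variable [Fintype κ]

theorem integrable_gram_mul_gram [IsFiniteMeasure μ] (hY : iIndepFun Y μ)
    (hYξ : ∀ t, IdentDistrib (Y t) ξ μ μ)
    (hξ : AEMeasurable ξ μ) (h4 : Integrable (fun ω => (∑ i, ξ ω i ^ 2) ^ 2) μ) (k j l i : ι) :
    Integrable (fun ω => (∑ t, Y t ω k * Y t ω j) * ∑ s, Y s ω l * Y s ω i) μ := by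
  simp_rw [Finset.sum_mul_sum]
  exact integrable_finsetSum _ fun t _ => integrable_finsetSum _ fun s _ =>
    integrable_iid_coord_products hY hYξ hξ h4 t s k j l i

theorem integral_gram_mul_gram [IsFiniteMeasure μ] (hY : iIndepFun Y μ)
    (hYξ : ∀ t, IdentDistrib (Y t) ξ μ μ)
    (hξ : AEMeasurable ξ μ) (h4 : Integrable (fun ω => (∑ i, ξ ω i ^ 2) ^ 2) μ) (k j l i : ι) :
    ∫ ω, (∑ t, Y t ω k * Y t ω j) * (∑ s, Y s ω l * Y s ω i) ∂μ =
      Fintype.card κ * fourthMoment μ ξ k j l i + (Fintype.card κ ^ 2 - Fintype.card κ) *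
        ((∫ ω, ξ ω k * ξ ω j ∂μ) * ∫ ω, ξ ω l * ξ ω i ∂μ) := by
  classical
  have hI := integrable_iid_coord_products hY hYξ hξ h4
  simp_rw [Finset.sum_mul_sum]
  rw [integral_finsetSum _ fun t _ => integrable_finsetSum _ fun s _ => hI t s k j l i]
  simp_rw [integral_finsetSum _ fun s _ => hI _ s k j l i, integral_iid_coord_products hY hYξ]
  set A := fourthMoment μ ξ k j l i
  set B := (∫ ω, ξ ω k * ξ ω j ∂μ) * ∫ ω, ξ ω l * ξ ω i ∂μ
  have hsplit : ∀ t s : κ, (if t = s then A else B) = B + if t = s then A - B else 0 := by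
    intro t s; split_ifs <;> ring
  simp only [hsplit, Finset.sum_add_distrib, Finset.sum_const, Finset.sum_ite_eq, Finset.mem_univ,
    if_true, Finset.card_univ, nsmul_eq_mul]
  ring

end IIDCopies

section RandomMatrix

variable {ι : Type*} [Fintype ι] {Ω : Type*} [MeasurableSpace Ω] {μ : Measure Ω}
  {A W : Ω → Matrix ι ι ℝ}

omit [Fintype ι] in
theorem measurable_mul_transpose {κ : Type*} [Fintype κ] :
    Measurable fun M : Matrix ι κ ℝ => M * Mᵀ :=
  measurable_pi_lambda _ fun i => measurable_pi_lambda _ fun j => by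
    simp only [mul_apply, transpose_apply]
    exact Finset.measurable_sum _ fun t _ => by fun_prop

theorem integrable_entry_mul_entry (hA : AEMeasurable A μ)
    (h : Integrable (fun ω => (A ω * (A ω)ᵀ).trace) μ) (i k j l : ι) :
    Integrable (fun ω => A ω i k * A ω j l) μ := by
  have hent : ∀ a b, AEMeasurable (fun ω => A ω a b) μ := fun a b =>
    (measurable_pi_apply b).comp_aemeasurable ((measurable_pi_apply a).comp_aemeasurable hA)
  refine h.mono ((hent i k).mul (hent j l)).aestronglyMeasurable (ae_of_all _ fun ω => ?_)
  have hF : (A ω * (A ω)ᵀ).trace = ∑ p : ι × ι, A ω p.1 p.2 ^ 2 := by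
    simp [trace, mul_apply, Fintype.sum_prod_type, sq]
  rw [Real.norm_eq_abs, hF, Real.norm_of_nonneg (by positivity)]
  exact abs_mul_le_sum_sq (fun p : ι × ι => A ω p.1 p.2) (i, k) (j, l)

theorem integral_trace_mul_mul_mul_mul_of_indepFun (hAW : IndepFun A W μ)
    (hA : ∀ i k j l, Integrable (fun ω => A ω i k * A ω j l) μ)
    (hW : ∀ k j l i, Integrable (fun ω => W ω k j * W ω l i) μ) :
    ∫ ω, (A ω * W ω * A ω * W ω).trace ∂μ =
      ∑ i, ∑ j, ∑ k, ∑ l, (∫ ω, A ω i k * A ω j l ∂μ) * ∫ ω, W ω k j * W ω l i ∂μ := by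
  have hindep : ∀ i j k l,
      IndepFun (fun ω => A ω i k * A ω j l) (fun ω => W ω k j * W ω l i) μ :=
    fun i j k l => hAW.comp (φ := fun M : Matrix ι ι ℝ => M i k * M j l)
      (ψ := fun M : Matrix ι ι ℝ => M k j * M l i) (by fun_prop) (by fun_prop)
  have hI : ∀ i j k l, Integrable (fun ω => A ω i k * A ω j l * (W ω k j * W ω l i)) μ :=
    fun i j k l => (hindep i j k l).integrable_mul (hA i k j l) (hW k j l i)
  simp_rw [trace_mul_mul_mul_mul]
  simp (disch := intro _ _; fun_prop) only [integral_finsetSum]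
  exact Finset.sum_congr rfl fun i _ => Finset.sum_congr rfl fun j _ => Finset.sum_congr rfl
    fun k _ => Finset.sum_congr rfl fun l _ => (hindep i j k l).integral_mul_eq_mul_integral
      (hA i k j l).aestronglyMeasurable (hW k j l i).aestronglyMeasurable

theorem integral_sum_mul_kronecker [DecidableEq ι]
    (hA : ∀ i k j l, Integrable (fun ω => A ω i k * A ω j l) μ) (a b c : ℝ) :
    ∑ i, ∑ j, ∑ k, ∑ l, (∫ ω, A ω i k * A ω j l ∂μ) *
        (a * ((if k = j then 1 else 0) * (if l = i then 1 else 0))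
          + b * ((if k = l then 1 else 0) * (if j = i then 1 else 0))
          + c * ((if k = i then 1 else 0) * (if j = l then 1 else 0))) =
      a * ∫ ω, (A ω * A ω).trace ∂μ + b * ∫ ω, (A ω * (A ω)ᵀ).trace ∂μ
        + c * ∫ ω, (A ω).trace ^ 2 ∂μ := by
  have hswap : ∀ f : ι → ι → Ω → ℝ, (∀ i j, Integrable (f i j) μ) →
      ∑ i, ∑ j, ∫ ω, f i j ω ∂μ = ∫ ω, ∑ i, ∑ j, f i j ω ∂μ := fun f hf => by
    rw [integral_finsetSum _ fun i _ => integrable_finsetSum _ fun j _ => hf i j]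
    exact Finset.sum_congr rfl fun i _ => (integral_finsetSum _ fun j _ => hf i j).symm
  rw [sum_mul_kronecker, hswap _ fun i j => hA i j j i, hswap _ fun i k => hA i k i k,
    hswap _ fun i j => hA i i j j]
  simp only [trace, diag, mul_apply, transpose_apply, sq, Finset.sum_mul_sum]

end RandomMatrix

section SampleCovariance

variable {ι κ : Type*} [Fintype ι] [DecidableEq ι] [Fintype κ] {Ω : Type*} [MeasurableSpace Ω]
  {μ : Measure Ω} [IsFiniteMeasure μ] {ξ : Ω → ι → ℝ} {X : Ω → Matrix ι κ ℝ}

theorem integral_gram_mul_gram_of_isRotationInvariant (hrot : IsRotationInvariant μ ξ)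
    (hξ : AEMeasurable ξ μ) (hcov : ∀ i j, ∫ ω, ξ ω i * ξ ω j ∂μ = if i = j then 1 else 0)
    (h4 : Integrable (fun ω => (∑ i, ξ ω i ^ 2) ^ 2) μ)
    (hX : iIndepFun (fun t ω i => X ω i t) μ) (hXξ : ∀ t, IdentDistrib (fun ω i => X ω i t) ξ μ μ)
    (k j l i : ι) :
    ∫ ω, (X ω * (X ω)ᵀ) k j * (X ω * (X ω)ᵀ) l i ∂μ =
      (Fintype.card κ * normalizedFourthMoment μ ξ + Fintype.card κ ^ 2 - Fintype.card κ) *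
          ((if k = j then 1 else 0) * (if l = i then 1 else 0))
        + Fintype.card κ * normalizedFourthMoment μ ξ *
          ((if k = l then 1 else 0) * (if j = i then 1 else 0))
        + Fintype.card κ * normalizedFourthMoment μ ξ *
          ((if k = i then 1 else 0) * (if j = l then 1 else 0)) := by
  simp only [mul_apply, transpose_apply]
  rw [integral_gram_mul_gram hX hXξ hξ h4, hrot.fourthMoment_eq hξ h4, hcov, hcov]
  ring

theorem integral_trace_mul_gram_mul_mul_gram {S : Ω → Matrix ι ι ℝ} (hSX : IndepFun S X μ)
    (hS : ∀ i k j l, Integrable (fun ω => S ω i k * S ω j l) μ) (hrot : IsRotationInvariant μ ξ)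
    (hξ : AEMeasurable ξ μ) (hcov : ∀ i j, ∫ ω, ξ ω i * ξ ω j ∂μ = if i = j then 1 else 0)
    (h4 : Integrable (fun ω => (∑ i, ξ ω i ^ 2) ^ 2) μ)
    (hX : iIndepFun (fun t ω i => X ω i t) μ) (hXξ : ∀ t, IdentDistrib (fun ω i => X ω i t) ξ μ μ) :
    ∫ ω, (S ω * (X ω * (X ω)ᵀ) * S ω * (X ω * (X ω)ᵀ)).trace ∂μ =
      (Fintype.card κ * normalizedFourthMoment μ ξ + Fintype.card κ ^ 2 - Fintype.card κ) *
          ∫ ω, (S ω * S ω).trace ∂μ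
        + Fintype.card κ * normalizedFourthMoment μ ξ * ∫ ω, (S ω * (S ω)ᵀ).trace ∂μ
        + Fintype.card κ * normalizedFourthMoment μ ξ * ∫ ω, (S ω).trace ^ 2 ∂μ := by
  have hW : ∀ k j l i, Integrable (fun ω => (X ω * (X ω)ᵀ) k j * (X ω * (X ω)ᵀ) l i) μ :=
    fun k j l i => by
      simpa only [mul_apply, transpose_apply] using integrable_gram_mul_gram hX hXξ hξ h4 k j l i
  have hSW : IndepFun S (fun ω => X ω * (X ω)ᵀ) μ :=
    hSX.comp measurable_id measurable_mul_transpose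
  rw [integral_trace_mul_mul_mul_mul_of_indepFun hSW hS hW]
  simp_rw [integral_gram_mul_gram_of_isRotationInvariant hrot hξ hcov h4 hX hXξ]
  exact integral_sum_mul_kronecker hS _ _ _

end SampleCovariance

theorem tendsto_sub_one_div_mul_add_mul_add_div {u v : ℕ → ℝ} {q : ℝ} (c d γ : ℝ)
    (hv : Tendsto v atTop atTop) (huv : Tendsto (fun j => u j / v j) atTop (nhds q)) :
    Tendsto (fun j => (v j - 1) / v j * c + γ * (u j + d) / v j) atTop (nhds (c + q * γ)) := by
  have hinv : Tendsto (fun j => (v j)⁻¹) atTop (nhds 0) := tendsto_inv_atTop_zero.comp hv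
  have hlim : Tendsto (fun j => c - c * (v j)⁻¹ + γ * (u j / v j) + γ * d * (v j)⁻¹) atTop
      (nhds (c - c * 0 + γ * q + γ * d * 0)) :=
    ((tendsto_const_nhds.sub (tendsto_const_nhds.mul hinv)).add
      (tendsto_const_nhds.mul huv)).add (tendsto_const_nhds.mul hinv)
  convert hlim.congr' ?_ using 2
  · ring
  filter_upwards [hv.eventually_gt_atTop 0] with j hj
  field_simp
  ring

theorem stmt_6_general {Ω : Type*} [MeasurableSpace Ω] (μ : Measure Ω) [IsProbabilityMeasure μ]
    (n T : ℕ) (hn : 1 ≤ n) (hT : 1 ≤ T) (p : ℝ) (hp : 0 < p)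
    (S R : Ω → Matrix (Fin n) (Fin n) ℝ) (hSmeas : Measurable S)
    (hS : ∀ ω, (S ω).PosSemidef)
    (hRS : ∀ ω, R ω * R ω = S ω)
    (hS2 : ∫ ω, tau n (S ω * S ω) ∂μ = 1 + p)
    (hS1 : ∫ ω, (tau n (S ω)) ^ 2 ∂μ = 1)
    (ξ : Ω → Fin n → ℝ) (hξmeas : Measurable ξ)
    (hrot : ∀ O : Matrix (Fin n) (Fin n) ℝ, Oᵀ * O = 1 →
      Measure.map (fun ω => O.mulVec (ξ ω)) μ = Measure.map ξ μ)
    (hcov : ∀ i j : Fin n, ∫ ω, ξ ω i * ξ ω j ∂μ = if i = j then (1 : ℝ) else 0)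
    (hmom4 : Integrable (fun ω => (∑ i, ξ ω i ^ 2) ^ 2) μ)
    (X : Ω → Matrix (Fin n) (Fin T) ℝ)
    (hindep : iIndepFun
      (fun t ω => fun i => X ω i t) μ)
    (hident : ∀ t : Fin T, IdentDistrib (fun ω => fun i => X ω i t) ξ μ μ)
    (hSX : IndepFun S X μ)
    (Ecov : Ω → Matrix (Fin n) (Fin n) ℝ)
    (hE : ∀ ω, Ecov ω = ((T : ℝ)⁻¹) • (R ω * X ω * (X ω)ᵀ * R ω))
    (γ : ℝ) (hγ : γ = (∫ ω, (∑ i, ξ ω i ^ 2) ^ 2 ∂μ) / ((n : ℝ) * ((n : ℝ) + 2))) :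
    (∫ ω, tau n (Ecov ω * Ecov ω) ∂μ =
        (((T : ℝ) - 1) / (T : ℝ)) * (1 + p) + γ * ((n : ℝ) + 2 * (1 + p)) / (T : ℝ)) ∧
      ∀ (N Tseq : ℕ → ℕ) (q : ℝ), 0 < q →
        Tendsto (fun j => ((N j : ℝ))) atTop atTop →
        Tendsto (fun j => ((Tseq j : ℝ))) atTop atTop →
        Tendsto (fun j => (N j : ℝ) / (Tseq j : ℝ)) atTop (nhds q) →
        Tendsto (fun j =>
            (((Tseq j : ℝ) - 1) / (Tseq j : ℝ)) * (1 + p) +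
              γ * ((N j : ℝ) + 2 * (1 + p)) / (Tseq j : ℝ))
          atTop (nhds (1 + p + q * γ)) := by
  refine ⟨?_, fun N Tseq q _ _ hTseq hq =>
    tendsto_sub_one_div_mul_add_mul_add_div _ _ _ hTseq hq⟩
  have hγ' : normalizedFourthMoment μ ξ = γ := by rw [hγ, normalizedFourthMoment, Fintype.card_fin]
  have hSt : ∀ ω, (S ω)ᵀ = S ω := fun ω => (hS ω).isHermitian
  have htrSS : ∫ ω, (S ω * S ω).trace ∂μ = n * (1 + p) := by
    simp_rw [trace_eq_mul_tau (S _ * S _)]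
    rw [integral_const_mul, hS2]
  have htrS : ∫ ω, (S ω).trace ^ 2 ∂μ = n ^ 2 := by
    simp_rw [trace_eq_mul_tau (S _), mul_pow]
    rw [integral_const_mul, hS1, mul_one]
  have hSint : ∀ i k j l, Integrable (fun ω => S ω i k * S ω j l) μ :=
    integrable_entry_mul_entry hSmeas.aemeasurable
      (Integrable.of_integral_ne_zero (by simp_rw [hSt]; rw [htrSS]; positivity))
  have hEcov : ∀ ω, tau n (Ecov ω * Ecov ω) = (T : ℝ)⁻¹ ^ 2 / n *
      (S ω * (X ω * (X ω)ᵀ) * S ω * (X ω * (X ω)ᵀ)).trace := fun ω => by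
    rw [hE, tau_smul_conj_mul_smul_conj, hRS]
  have hn0 : (n : ℝ) ≠ 0 := Nat.cast_ne_zero.2 (by omega)
  have hT0 : (T : ℝ) ≠ 0 := Nat.cast_ne_zero.2 (by omega)
  rw [integral_congr_ae (ae_of_all _ hEcov), integral_const_mul, integral_trace_mul_gram_mul_mul_gram
    hSX hSint hrot hξmeas.aemeasurable hcov hmom4 hindep hident, hγ', Fintype.card_fin]
  simp_rw [hSt]
  rw [htrSS, htrS]
  field_simp
  ring

/-- For a random inverse-Wishart-type population matrix `Σ` with `E[τ(Σ²)] = 1+p` and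
`E[τ(Σ)²] = 1`, independent of the noise, the sample covariance satisfies
`E[τ(E²)] = ((T−1)/T)(1+p) + γ(n+2(1+p))/T`; consequently, along `n, T → ∞` with
`n/T → q > 0` and `γ` held fixed, `E[τ(E²)] → 1 + p + qγ`. -/
theorem stmt_6 {Ω : Type*} [MeasurableSpace Ω] (μ : Measure Ω) [IsProbabilityMeasure μ]
    (n T : ℕ) (hn : 1 ≤ n) (hT : 1 ≤ T) (p : ℝ) (hp : 0 < p)
    (S R : Ω → Matrix (Fin n) (Fin n) ℝ) (hSmeas : Measurable S)
    (hS : ∀ ω, (S ω).PosSemidef) (hR : ∀ ω, (R ω).PosSemidef)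
    (hRS : ∀ ω, R ω * R ω = S ω)
    (hS2 : ∫ ω, tau n (S ω * S ω) ∂μ = 1 + p)
    (hS1 : ∫ ω, (tau n (S ω)) ^ 2 ∂μ = 1)
    (ξ : Ω → Fin n → ℝ) (hξmeas : Measurable ξ)
    (hrot : ∀ O : Matrix (Fin n) (Fin n) ℝ, Oᵀ * O = 1 →
      Measure.map (fun ω => O.mulVec (ξ ω)) μ = Measure.map ξ μ)
    (hcov : ∀ i j : Fin n, ∫ ω, ξ ω i * ξ ω j ∂μ = if i = j then (1 : ℝ) else 0)
    (hmom4 : Integrable (fun ω => (∑ i, ξ ω i ^ 2) ^ 2) μ)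
    (X : Ω → Matrix (Fin n) (Fin T) ℝ) (hXmeas : Measurable X)
    (hindep : iIndepFun
      (fun t ω => fun i => X ω i t) μ)
    (hident : ∀ t : Fin T, IdentDistrib (fun ω => fun i => X ω i t) ξ μ μ)
    (hSX : IndepFun S X μ)
    (Ecov : Ω → Matrix (Fin n) (Fin n) ℝ)
    (hE : ∀ ω, Ecov ω = ((T : ℝ)⁻¹) • (R ω * X ω * (X ω)ᵀ * R ω))
    (γ : ℝ) (hγ : γ = (∫ ω, (∑ i, ξ ω i ^ 2) ^ 2 ∂μ) / ((n : ℝ) * ((n : ℝ) + 2))) :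
    (∫ ω, tau n (Ecov ω * Ecov ω) ∂μ =
        (((T : ℝ) - 1) / (T : ℝ)) * (1 + p) + γ * ((n : ℝ) + 2 * (1 + p)) / (T : ℝ)) ∧
      ∀ (N Tseq : ℕ → ℕ) (q : ℝ), 0 < q →
        Tendsto (fun j => ((N j : ℝ))) atTop atTop →
        Tendsto (fun j => ((Tseq j : ℝ))) atTop atTop →
        Tendsto (fun j => (N j : ℝ) / (Tseq j : ℝ)) atTop (nhds q) →
        Tendsto (fun j =>
            (((Tseq j : ℝ) - 1) / (Tseq j : ℝ)) * (1 + p) +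
              γ * ((N j : ℝ) + 2 * (1 + p)) / (Tseq j : ℝ))
          atTop (nhds (1 + p + q * γ)) :=
  stmt_6_general μ n T hn hT p hp S R hSmeas hS hRS hS2 hS1 ξ hξmeas hrot hcov hmom4 X hindep hident
    hSX Ecov hE γ hγ
end

section
/- Let n ≥ 1 and let E and Σ be symmetric n×n real matrices with τ(E) = τ(Σ) = 1, and suppose that Iₙ, E, E² are linearly independent (so that the Gram determinant D = (τ(E²) − τ(E))·(τ(E⁴) − τ(E²)²) − (τ(E³) − τ(E²))² is strictly positive and τ(E²) > 1). Define α₁ = [ (τ(E²) − τ(E³))·(τ(EΣ) − 1) + (τ(E²Σ) − τ(E²))·(τ(E²) − τ(E)) ] / D, α₂ = [ τ(EΣ) − 1 − α₁·(τ(E³) − τ(E²)) ] / (τ(E²) − τ(E)), and α₃ = 1 − α₁·τ(E²) − α₂·τ(E). Then (α₁, α₂, α₃) is the unique minimizer of (a₁, a₂, a₃) ↦ τ((a₁E² + a₂E + a₃Iₙ − Σ)²) over all real triples subject to the constraint τ(a₁E² + a₂E + a₃Iₙ) = 1. -/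
open Matrix
variable {n : ℕ}

lemma tau_add (A B : Matrix (Fin n) (Fin n) ℝ) : tau n (A + B) = tau n A + tau n B := by
  simp [tau, trace_add, mul_add]

lemma tau_sub (A B : Matrix (Fin n) (Fin n) ℝ) : tau n (A - B) = tau n A - tau n B := by
  simp [tau, trace_sub, mul_sub]

lemma tau_smul (r : ℝ) (A : Matrix (Fin n) (Fin n) ℝ) : tau n (r • A) = r * tau n A := by
  simp [tau, trace_smul]; ring

lemma tau_mul_comm (A B : Matrix (Fin n) (Fin n) ℝ) : tau n (A * B) = tau n (B * A) := by
  simp [tau, trace_mul_comm A B]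

lemma tau_one (hn : 1 ≤ n) : tau n (1 : Matrix (Fin n) (Fin n) ℝ) = 1 := by
  simp [tau, trace_one]
  field_simp

lemma tau_zero : tau n (0 : Matrix (Fin n) (Fin n) ℝ) = 0 := by simp [tau]

lemma tau_sq_pos (hn : 1 ≤ n) (M : Matrix (Fin n) (Fin n) ℝ) (hM : M.IsSymm) (h0 : M ≠ 0) :
    0 < tau n (M ^ 2) := by
  have key : (M ^ 2).trace = ∑ i, ∑ j, (M i j) ^ 2 := by
    rw [pow_two]
    simp only [trace, Matrix.mul_apply, diag]
    refine Finset.sum_congr rfl fun i _ => Finset.sum_congr rfl fun j _ => ?_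
    rw [hM.apply i j]; ring
  have hpos : 0 < ∑ i, ∑ j, (M i j) ^ 2 := by
    obtain ⟨i, j, hij⟩ : ∃ i j, M i j ≠ 0 := by
      by_contra h; push_neg at h; apply h0; ext i j; exact h i j
    have : 0 < (M i j) ^ 2 := by positivity
    calc 0 < (M i j)^2 := this
    _ ≤ ∑ j, (M i j)^2 := Finset.single_le_sum (f := fun j => (M i j)^2)
        (fun k _ => sq_nonneg _) (Finset.mem_univ j)
    _ ≤ ∑ i, ∑ j, (M i j)^2 :=
      Finset.single_le_sum (f := fun i => ∑ j, (M i j)^2)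
        (fun k _ => Finset.sum_nonneg fun l _ => sq_nonneg _) (Finset.mem_univ i)
  unfold tau
  rw [key]
  have : (0:ℝ) < n := by exact_mod_cast hn
  positivity

lemma tau_expand (hn : 1 ≤ n) (E S : Matrix (Fin n) (Fin n) ℝ) (a₁ a₂ a₃ : ℝ) :
    tau n ((a₁ • E^2 + a₂ • E + a₃ • (1 : Matrix (Fin n) (Fin n) ℝ) - S)^2) =
      a₁^2 * tau n (E^4) + a₂^2 * tau n (E^2) + a₃^2 + tau n (S^2)
      + 2*a₁*a₂ * tau n (E^3) + 2*a₁*a₃ * tau n (E^2) + 2*a₂*a₃ * tau n E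
      - 2*a₁ * tau n (E^2*S) - 2*a₂ * tau n (E*S) - 2*a₃ * tau n S := by
  have e1 : E^2*E^2 = E^4 := by rw [← pow_add]
  have e2 : E^2*E = E^3 := by rw [← pow_succ]
  have e3 : E*E^2 = E^3 := by rw [← pow_succ']
  have e4 : E*E = E^2 := (sq E).symm
  have e5 : S*S = S^2 := (sq S).symm
  have c1 : tau n (S * E^2) = tau n (E^2 * S) := tau_mul_comm _ _
  have c2 : tau n (S * E) = tau n (E * S) := tau_mul_comm _ _
  rw [pow_two]
  simp only [sub_mul, mul_sub, add_mul, mul_add, smul_mul_assoc, mul_smul_comm, smul_smul,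
    mul_one, one_mul, e1, e2, e3, e4, e5,
    tau_sub, tau_add, tau_smul, c1, c2, tau_one hn]
  ring

lemma tau_expandQ (hn : 1 ≤ n) (E : Matrix (Fin n) (Fin n) ℝ) (a₁ a₂ a₃ : ℝ) :
    tau n ((a₁ • E^2 + a₂ • E + a₃ • (1 : Matrix (Fin n) (Fin n) ℝ))^2) =
      a₁^2 * tau n (E^4) + a₂^2 * tau n (E^2) + a₃^2
      + 2*a₁*a₂ * tau n (E^3) + 2*a₁*a₃ * tau n (E^2) + 2*a₂*a₃ * tau n E := by
  have h := tau_expand hn E 0 a₁ a₂ a₃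
  simp only [sub_zero, mul_zero, tau_zero] at h
  rw [h]
  have : tau n ((0 : Matrix (Fin n) (Fin n) ℝ)^2) = 0 := by
    rw [show ((0: Matrix (Fin n) (Fin n) ℝ))^2 = 0 by rw [pow_two, mul_zero], tau_zero]
  rw [this]; ring

lemma tau_lin (hn : 1 ≤ n) (E : Matrix (Fin n) (Fin n) ℝ) (a₁ a₂ a₃ : ℝ) :
    tau n (a₁ • E^2 + a₂ • E + a₃ • (1 : Matrix (Fin n) (Fin n) ℝ)) =
      a₁ * tau n (E^2) + a₂ * tau n E + a₃ := by
  simp [tau_add, tau_smul, tau_one hn]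

lemma isSymm_comb {E : Matrix (Fin n) (Fin n) ℝ} (hE : E.IsSymm) (v₁ v₂ v₃ : ℝ) :
    (v₁ • E^2 + v₂ • E + v₃ • (1 : Matrix (Fin n) (Fin n) ℝ)).IsSymm := by
  unfold Matrix.IsSymm at *
  simp [transpose_add, transpose_smul, transpose_pow, hE]
/-- Optimal quadratic shrinkage: for symmetric matrices `E, Σ` with `τ(E) = τ(Σ) = 1` and
`I, E, E²` linearly independent (so the Gram determinant `D` is positive and `τ(E²) > 1`),
the explicit coefficients `(α₁, α₂, α₃)` give the unique minimizer of
`(a₁,a₂,a₃) ↦ τ((a₁E² + a₂E + a₃I − Σ)²)` under the constraint `τ(a₁E² + a₂E + a₃I) = 1`. -/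
theorem stmt_12 (n : ℕ) (hn : 1 ≤ n)
    (E S : Matrix (Fin n) (Fin n) ℝ) (hE : E.IsSymm) (hS : S.IsSymm)
    (hτE : tau n E = 1) (hτS : tau n S = 1)
    (hli : LinearIndependent ℝ ![(1 : Matrix (Fin n) (Fin n) ℝ), E, E ^ 2])
    (D α₁ α₂ α₃ : ℝ)
    (hD : D = (tau n (E ^ 2) - tau n E) * (tau n (E ^ 4) - (tau n (E ^ 2)) ^ 2) -
      (tau n (E ^ 3) - tau n (E ^ 2)) ^ 2)
    (hα₁ : α₁ = ((tau n (E ^ 2) - tau n (E ^ 3)) * (tau n (E * S) - 1) +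
        (tau n (E ^ 2 * S) - tau n (E ^ 2)) * (tau n (E ^ 2) - tau n E)) / D)
    (hα₂ : α₂ = (tau n (E * S) - 1 - α₁ * (tau n (E ^ 3) - tau n (E ^ 2))) /
      (tau n (E ^ 2) - tau n E))
    (hα₃ : α₃ = 1 - α₁ * tau n (E ^ 2) - α₂ * tau n E) :
    0 < D ∧ 1 < tau n (E ^ 2) ∧
      tau n (α₁ • E ^ 2 + α₂ • E + α₃ • (1 : Matrix (Fin n) (Fin n) ℝ)) = 1 ∧
      ∀ a₁ a₂ a₃ : ℝ,
        tau n (a₁ • E ^ 2 + a₂ • E + a₃ • (1 : Matrix (Fin n) (Fin n) ℝ)) = 1 →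
        (a₁, a₂, a₃) ≠ (α₁, α₂, α₃) →
        tau n ((α₁ • E ^ 2 + α₂ • E + α₃ • (1 : Matrix (Fin n) (Fin n) ℝ) - S) ^ 2) <
          tau n ((a₁ • E ^ 2 + a₂ • E + a₃ • (1 : Matrix (Fin n) (Fin n) ℝ) - S) ^ 2) := by
  -- abbreviations
  set b := tau n (E ^ 2) with hbdef
  set c := tau n (E ^ 3) with hcdef
  set d := tau n (E ^ 4) with hddef
  set p := tau n (E * S) with hpdef
  set q := tau n (E ^ 2 * S) with hqdef
  rw [hτE] at hD hα₁ hα₂ hα₃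
  -- linear independence consequences
  have hcomb : ∀ v₁ v₂ v₃ : ℝ,
      v₁ • E^2 + v₂ • E + v₃ • (1 : Matrix (Fin n) (Fin n) ℝ) = 0 →
      v₁ = 0 ∧ v₂ = 0 ∧ v₃ = 0 := by
    intro v₁ v₂ v₃ h
    have h2 := Fintype.linearIndependent_iff.mp hli ![v₃, v₂, v₁] (by
      rw [Fin.sum_univ_three]
      simp only [Matrix.cons_val_zero, Matrix.cons_val_one, Matrix.head_cons,
        Matrix.cons_val_two, Matrix.tail_cons]
      rw [show v₃ • (1 : Matrix (Fin n) (Fin n) ℝ) + v₂ • E + v₁ • E ^ 2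
          = v₁ • E^2 + v₂ • E + v₃ • 1 by abel, h])
    exact ⟨by simpa using h2 2, by simpa using h2 1, by simpa using h2 0⟩
  -- τ(E²) > 1
  have hb1 : 1 < b := by
    have hMne : (0:ℝ) • E^2 + (1:ℝ) • E + (-1:ℝ) • (1 : Matrix (Fin n) (Fin n) ℝ) ≠ 0 := by
      intro h
      have := (hcomb 0 1 (-1) h).2.1
      norm_num at this
    have hpos := tau_sq_pos hn _ (isSymm_comb hE 0 1 (-1)) hMne
    rw [tau_expandQ hn E 0 1 (-1)] at hpos
    rw [hτE] at hpos
    nlinarith [hpos]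
  have hbne : b - 1 ≠ 0 := by linarith
  -- D > 0
  have hD0 : 0 < D := by
    set t : ℝ := (c - b) / (b - 1) with htdef
    have hMne : (1:ℝ) • E^2 + (-t) • E + (t - b) • (1 : Matrix (Fin n) (Fin n) ℝ) ≠ 0 := by
      intro h
      have := (hcomb 1 (-t) (t - b) h).1
      norm_num at this
    have hpos := tau_sq_pos hn _ (isSymm_comb hE 1 (-t) (t - b)) hMne
    rw [tau_expandQ hn E 1 (-t) (t - b), hτE] at hpos
    have hDt : D = (b - 1) * ((1:ℝ)^2 * d + (-t)^2 * b + (t - b)^2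
        + 2*1*(-t)*c + 2*1*(t-b)*b + 2*(-t)*(t-b)*1) := by
      rw [hD, htdef]
      field_simp
      ring
    rw [hDt]
    exact mul_pos (by linarith) hpos
  have hDne : D ≠ 0 := ne_of_gt hD0
  -- the stationarity equations
  have hA1 : α₁ * D = (b - c) * (p - 1) + (q - b) * (b - 1) := by
    rw [hα₁]; field_simp
  have hA2 : α₂ * (b - 1) = p - 1 - α₁ * (c - b) := by
    rw [hα₂]; field_simp
  have hg3 : α₁ * b + α₂ + α₃ = 1 := by rw [hα₃]; ring
  have hg2 : α₁ * c + α₂ * b + α₃ - p = 0 := by linear_combination hA2 + hg3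
  have hg1 : α₁ * d + α₂ * c + α₃ * b - q = 0 := by
    have h' : (α₁ * d + α₂ * c + α₃ * b - q) * (b - 1) = 0 := by
      linear_combination hA1 - α₁ * hD + (c - b) * hA2 + (b * (b - 1)) * hg3
    rcases mul_eq_zero.mp h' with h | h
    · exact h
    · exact absurd h hbne
  -- constraint holds at α
  have hconα : tau n (α₁ • E ^ 2 + α₂ • E + α₃ • (1 : Matrix (Fin n) (Fin n) ℝ)) = 1 := by
    rw [tau_lin hn, hτE, ← hbdef]
    linarith [hg3]
  refine ⟨hD0, hb1, hconα, ?_⟩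
  intro a₁ a₂ a₃ hcon hne
  -- the difference vector is nonzero
  have hVne : (a₁ - α₁) • E^2 + (a₂ - α₂) • E + (a₃ - α₃) • (1 : Matrix (Fin n) (Fin n) ℝ) ≠ 0 := by
    intro h
    obtain ⟨h1, h2, h3⟩ := hcomb _ _ _ h
    apply hne
    have e1 : a₁ = α₁ := by linarith
    have e2 : a₂ = α₂ := by linarith
    have e3 : a₃ = α₃ := by linarith
    rw [e1, e2, e3]
  have hpos := tau_sq_pos hn _ (isSymm_comb hE (a₁ - α₁) (a₂ - α₂) (a₃ - α₃)) hVne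
  -- key identity
  have key : tau n ((a₁ • E ^ 2 + a₂ • E + a₃ • (1 : Matrix (Fin n) (Fin n) ℝ) - S) ^ 2)
      = tau n ((α₁ • E ^ 2 + α₂ • E + α₃ • (1 : Matrix (Fin n) (Fin n) ℝ) - S) ^ 2)
      + tau n (((a₁ - α₁) • E^2 + (a₂ - α₂) • E + (a₃ - α₃) • (1 : Matrix (Fin n) (Fin n) ℝ))^2) := by
    rw [tau_expand hn, tau_expand hn, tau_expandQ hn, hτE, hτS, ← hbdef, ← hcdef, ← hddef,
      ← hpdef, ← hqdef]
    linear_combination 2*(a₁-α₁)*hg1 + 2*(a₂-α₂)*hg2 + 2*(a₃-α₃)*hg3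
  rw [key]
  linarith [hpos]
end
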